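/- Let f : ℝ^n → ℝ^n be Lipschitz and let Δ ⊆ ℝ^n be a d-dimensional polyhedron. For ℋ^d-almost every x ∈ Δ, f is differentiable at x along Δ, and for any affine map g agreeing with Df(x) on the tangent plane of Δ at x up to error ρ·Lip(f) on vectors of length δ (i.e. the edge images differ by at most 6ρ·Lip(f)·δ), the approximate Jacobians satisfy |J_d g(x) − J_d f(x)| ≤ 6ρ·Lip(f)^d / ((d−1)!·κ), where κ is the fullness of the simplex containing x. -/

import Mathlib

/-- The Gram inner product `⟪v₁ ∧ ⋯ ∧ v_d, w₁ ∧ ⋯ ∧ w_d⟫`, computed as the determinant of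
the Gram matrix. -/
noncomputable def wedgeInner {n d : ℕ} (v w : Fin d → EuclideanSpace ℝ (Fin n)) : ℝ :=
  Matrix.det (Matrix.of fun i j => (inner ℝ (v i) (w j) : ℝ))

/-- The norm `|v₁ ∧ ⋯ ∧ v_d|` of a wedge product. -/
noncomputable def wedgeNorm {n d : ℕ} (v : Fin d → EuclideanSpace ℝ (Fin n)) : ℝ :=
  Real.sqrt (wedgeInner v v)

/-!
`wedgeNorm v` is the norm of `v₁ ∧ ⋯ ∧ v_d` in Mathlib's inner product space `⋀[ℝ]^d E`.
Hadamard's inequality `‖v₁ ∧ ⋯ ∧ v_d‖ ≤ ∏ ‖vᵢ‖` (AM–GM on the eigenvalues of the Gram matrix,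
in the form `λ ≤ exp (λ - 1)`) bounds the wedge as a multilinear map, so exchanging the edges
`f' (vⱼ)` for `g' (vⱼ)` one at a time moves the wedge by at most `d · 6ρLδ · (Lδ)^(d-1)`
(Whitney I.12.17). Dividing by `|v₁ ∧ ⋯ ∧ v_d| = d! δ^d κ` and using `d! = d (d-1)!` gives the
bound.
-/

theorem Matrix.PosSemidef.det_le_exp_trace_sub_card {ι : Type*} [Fintype ι] [DecidableEq ι]
    {A : Matrix ι ι ℝ} (hA : A.PosSemidef) :
    A.det ≤ Real.exp (A.trace - Fintype.card ι) := by
  rw [hA.isHermitian.det_eq_prod_eigenvalues, hA.isHermitian.trace_eq_sum_eigenvalues]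
  simp only [RCLike.ofReal_real_eq_id, id]
  calc ∏ i, hA.isHermitian.eigenvalues i ≤ ∏ i, Real.exp (hA.isHermitian.eigenvalues i - 1) :=
        Finset.prod_le_prod (fun i _ => hA.eigenvalues_nonneg i)
          fun i _ => by linarith [Real.add_one_le_exp (hA.isHermitian.eigenvalues i - 1)]
    _ = _ := by rw [← Real.exp_sum, Finset.sum_sub_distrib]; simp

open exteriorPower

section

variable {E : Type*} [NormedAddCommGroup E] [InnerProductSpace ℝ E]

theorem Matrix.det_gram_le_one {ι : Type*} [Fintype ι] [DecidableEq ι] {u : ι → E}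
    (hu : ∀ i, ‖u i‖ = 1) : (Matrix.gram ℝ u).det ≤ 1 := by
  have htrace : (Matrix.gram ℝ u).trace = Fintype.card ι := by
    simp [Matrix.trace, Matrix.gram, hu]
  simpa [htrace] using (Matrix.posSemidef_gram ℝ u).det_le_exp_trace_sub_card

theorem exteriorPower.norm_ιMulti_le_prod_norm [FiniteDimensional ℝ E] {d : ℕ} (v : Fin d → E) :
    ‖ιMulti ℝ d v‖ ≤ ∏ i, ‖v i‖ := by
  by_cases! hv : ∃ i, v i = 0
  · obtain ⟨i, hi⟩ := hv
    rw [(ιMulti ℝ d).map_coord_zero i hi, norm_zero]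
    positivity
  set u : Fin d → E := fun i => ‖v i‖⁻¹ • v i
  have hu : ∀ i, ‖u i‖ = 1 := fun i => norm_smul_inv_norm (hv i)
  have hvu : v = fun i => ‖v i‖ • u i := funext fun i => by
    simp [u, smul_smul, mul_inv_cancel₀ (norm_ne_zero_iff.mpr (hv i))]
  have hunit : ‖ιMulti ℝ d u‖ ≤ 1 := by
    rw [← sq_le_one_iff₀ (norm_nonneg _), ← real_inner_self_eq_norm_sq, inner_ιMulti_self]
    exact Matrix.det_gram_le_one hu
  calc ‖ιMulti ℝ d v‖ = (∏ i, ‖v i‖) * ‖ιMulti ℝ d u‖ := by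
        conv_lhs => rw [hvu, (ιMulti ℝ d).map_smul_univ, norm_smul]
        simp
    _ ≤ ∏ i, ‖v i‖ := mul_le_of_le_one_right (by positivity) hunit

theorem exteriorPower.norm_ιMulti_sub_le [FiniteDimensional ℝ E] {d : ℕ} {u w : Fin d → E}
    {C D : ℝ} (hu : ∀ i, ‖u i‖ ≤ C) (hw : ∀ i, ‖w i‖ ≤ C) (hwu : ∀ i, ‖w i - u i‖ ≤ D) :
    ‖ιMulti ℝ d w - ιMulti ℝ d u‖ ≤ d * D * C ^ (d - 1) := by
  classical
  let f : MultilinearMap ℝ (fun _ : Fin d => E) (⋀[ℝ]^d E) := (ιMulti ℝ d).toMultilinearMap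
  have hadamard (v : Fin d → E) : ‖f v‖ ≤ 1 * ∏ i, ‖v i‖ := by
    rw [one_mul]
    exact norm_ιMulti_le_prod_norm v
  calc ‖ιMulti ℝ d w - ιMulti ℝ d u‖
      ≤ 1 * ∑ i, ∏ j, if j = i then ‖w i - u i‖ else max ‖w j‖ ‖u j‖ :=
        f.norm_image_sub_le_of_bound' zero_le_one hadamard w u
    _ ≤ ∑ i : Fin d, ∏ j, Function.update (fun _ => C) i D j := by
        rw [one_mul]
        gcongr with i _ j
        rcases eq_or_ne j i with rfl | hji
        · simpa using hwu j
        · simpa [hji] using ⟨hw j, hu j⟩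
    _ = d * D * C ^ (d - 1) := by
        simp [Finset.prod_update_of_mem, Finset.card_sdiff, mul_assoc]

end

theorem wedgeNorm_eq_norm_ιMulti {n d : ℕ} (v : Fin d → EuclideanSpace ℝ (Fin n)) :
    wedgeNorm v = ‖ιMulti ℝ d v‖ := by
  rw [wedgeNorm, wedgeInner, ← Matrix.gram, ← inner_ιMulti_self, real_inner_self_eq_norm_sq,
    Real.sqrt_sq (norm_nonneg _)]

theorem abs_wedgeNorm_sub_le {n d : ℕ} {u w : Fin d → EuclideanSpace ℝ (Fin n)} {C D : ℝ}
    (hu : ∀ i, ‖u i‖ ≤ C) (hw : ∀ i, ‖w i‖ ≤ C) (hwu : ∀ i, ‖w i - u i‖ ≤ D) :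
    |wedgeNorm w - wedgeNorm u| ≤ d * D * C ^ (d - 1) := by
  rw [wedgeNorm_eq_norm_ιMulti, wedgeNorm_eq_norm_ιMulti]
  exact (abs_norm_sub_norm_le _ _).trans (norm_ιMulti_sub_le hu hw hwu)

theorem stmt9_general (n d : ℕ) (hd : 1 ≤ d) (L ρ δ κ : ℝ)
    (f' g' : EuclideanSpace ℝ (Fin n) →L[ℝ] EuclideanSpace ℝ (Fin n))
    (v : Fin d → EuclideanSpace ℝ (Fin n))
    (hf' : ∀ j, ‖f' (v j)‖ ≤ L * δ)
    (hg' : ∀ j, ‖g' (v j)‖ ≤ L * δ)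
    (hclose : ∀ j, ‖g' (v j) - f' (v j)‖ ≤ 6 * ρ * L * δ)
    (hκ : κ = wedgeNorm v / (Nat.factorial d * δ ^ d)) (hκpos : 0 < κ) :
    |wedgeNorm (fun j => g' (v j)) / wedgeNorm v
        - wedgeNorm (fun j => f' (v j)) / wedgeNorm v|
      ≤ 6 * ρ * L ^ d / (Nat.factorial (d - 1) * κ) := by
  -- a vanishing denominator would give the junk value `κ = wedgeNorm v / 0 = 0`
  have hscale : (d.factorial : ℝ) * δ ^ d ≠ 0 := by
    rintro h
    rw [h, div_zero] at hκ
    exact hκpos.ne' hκ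
  have hvol : wedgeNorm v = κ * (d.factorial * δ ^ d) := by
    rw [hκ, div_mul_cancel₀ _ hscale]
  have hvol_nonneg : 0 ≤ wedgeNorm v := Real.sqrt_nonneg _
  have hfactorial : (d.factorial : ℝ) = d * (d - 1).factorial := by
    exact_mod_cast (Nat.mul_factorial_pred (by omega)).symm
  have hpow : (L * δ) ^ (d - 1) * (L * δ) = L ^ d * δ ^ d := by
    rw [← pow_succ, Nat.sub_add_cancel hd, mul_pow]
  have hdδ : (d : ℝ) * δ ^ d ≠ 0 :=
    mul_ne_zero (by positivity) (right_ne_zero_of_mul hscale)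
  rw [div_sub_div_same, abs_div, abs_of_nonneg hvol_nonneg]
  calc _ ≤ d * (6 * ρ * L * δ) * (L * δ) ^ (d - 1) / wedgeNorm v :=
        div_le_div_of_nonneg_right (abs_wedgeNorm_sub_le hf' hg' hclose) hvol_nonneg
    _ = 6 * ρ * L ^ d * (d * δ ^ d) / ((d - 1).factorial * κ * (d * δ ^ d)) := by
        rw [hvol, hfactorial]
        congr 1
        · linear_combination (6 * ρ * d) * hpow
        · ring
    _ = 6 * ρ * L ^ d / ((d - 1).factorial * κ) := mul_div_mul_right _ _ hdδ

/-- Quantitative comparison of Jacobians of a Lipschitz map and its simplexwise affine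
approximation: if `f'` is the derivative of `f` at `x` along the simplex with edge vectors
`v j` (of diameter `δ`), `g'` is the linear part of an affine map whose edge images differ
from those of `f'` by at most `6ρ·L·δ`, and `κ = |v₁∧⋯∧v_d|/(d!·δ^d)` is the fullness of
the simplex, then the `d`-Jacobians `|f'(v₁)∧⋯∧f'(v_d)|/|v₁∧⋯∧v_d|` and
`|g'(v₁)∧⋯∧g'(v_d)|/|v₁∧⋯∧v_d|` differ by at most `6ρ·L^d/((d−1)!·κ)`. -/
theorem stmt9 (n d : ℕ) (hd : 1 ≤ d) (L ρ δ κ : ℝ)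
    (hL : 0 < L) (hρ : 0 < ρ) (hρ1 : ρ < 1) (hδ : 0 < δ)
    (f' g' : EuclideanSpace ℝ (Fin n) →L[ℝ] EuclideanSpace ℝ (Fin n))
    (v : Fin d → EuclideanSpace ℝ (Fin n))
    (hv : ∀ j, ‖v j‖ ≤ δ)
    (hf' : ∀ j, ‖f' (v j)‖ ≤ L * δ)
    (hg' : ∀ j, ‖g' (v j)‖ ≤ L * δ)
    (hclose : ∀ j, ‖g' (v j) - f' (v j)‖ ≤ 6 * ρ * L * δ)
    (hκ : κ = wedgeNorm v / (Nat.factorial d * δ ^ d)) (hκpos : 0 < κ) :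
    |wedgeNorm (fun j => g' (v j)) / wedgeNorm v
        - wedgeNorm (fun j => f' (v j)) / wedgeNorm v|
      ≤ 6 * ρ * L ^ d / (Nat.factorial (d - 1) * κ) :=
  stmt9_general n d hd L ρ δ κ f' g' v hf' hg' hclose hκ hκpos
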